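/- arXiv:0911.4204 — 4 statements merged into one kernel-verified Lean document; each statement's English description precedes it below -/
import Mathlib

section
/- From a separating cover on a ground set of m elements consisting of n sets one can construct a finite simple graph on n vertices with at least m maximal independent sets; that is, if there is a separating cover over an m-element ground set consisting of n sets, then there is a graph on n vertices with at least m MISes. -/
/-- `I` is a maximal independent set (MIS) of `G`: it is independent, and it is not
properly contained in any other independent set. -/
def IsMaxIndepSet {V : Type*} (G : SimpleGraph V) (I : Set V) : Prop :=
  (∀ x ∈ I, ∀ y ∈ I, ¬ G.Adj x y) ∧
  ∀ J : Set V, (∀ x ∈ J, ∀ y ∈ J, ¬ G.Adj x y) → I ⊆ J → J = I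

/-- The number of maximal independent sets of `G`. -/
noncomputable def misCount {V : Type*} (G : SimpleGraph V) : ℕ :=
  Nat.card {I : Set V // IsMaxIndepSet G I}

/-- A family `F` of `k` subsets of the ground set `Fin m` is a separating cover if the
sets cover the ground set and for every pair of distinct elements `x, y` there are
disjoint sets in the family with `x` in one and `y` in the other. -/
def IsSepCover {m k : ℕ} (F : Fin k → Set (Fin m)) : Prop :=
  (∀ x : Fin m, ∃ i, x ∈ F i) ∧
  ∀ x y : Fin m, x ≠ y → ∃ i j, x ∈ F i ∧ y ∈ F j ∧ Disjoint (F i) (F j)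

/-- `sepNum m` is the minimum number of sets in a separating cover on an `m`-element ground set. -/
noncomputable def sepNum (m : ℕ) : ℕ := sInf {k | ∃ F : Fin k → Set (Fin m), IsSepCover F}

/-- Every independent set extends to a maximal independent set. -/
lemma exists_maxIndepSet {V : Type*} (G : SimpleGraph V) (I : Set V)
    (hI : ∀ x ∈ I, ∀ y ∈ I, ¬ G.Adj x y) :
    ∃ M, I ⊆ M ∧ IsMaxIndepSet G M := by
  obtain ⟨M, hIM, hM⟩ := zorn_subset_nonempty
    {J : Set V | ∀ x ∈ J, ∀ y ∈ J, ¬ G.Adj x y}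
    (fun c hc hchain hcne => by
      refine ⟨⋃₀ c, ?_, fun s hs => Set.subset_sUnion_of_mem hs⟩
      rintro x ⟨s, hs, hxs⟩ y ⟨t, ht, hyt⟩
      rcases hchain.total hs ht with h | h
      · exact hc ht x (h hxs) y hyt
      · exact hc hs x hxs y (h hyt)) I hI
  exact ⟨M, hIM, hM.1, fun J hJ hMJ => (hM.eq_of_le hJ hMJ).symm⟩

/-- From a separating cover on an `m`-element ground set with `n` sets one can construct a
graph on `n` vertices with at least `m` maximal independent sets. -/
theorem graph_of_sepCover (m n : ℕ) (hF : ∃ F : Fin n → Set (Fin m), IsSepCover F) :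
    ∃ G : SimpleGraph (Fin n), m ≤ misCount G := by
  obtain ⟨F, hcov, hsep⟩ := hF
  set G := SimpleGraph.fromRel (fun i j => Disjoint (F i) (F j)) with hG
  refine ⟨G, ?_⟩
  have hadj : ∀ i j, G.Adj i j ↔ i ≠ j ∧ (Disjoint (F i) (F j) ∨ Disjoint (F j) (F i)) := by
    intro i j; rfl
  -- for each x, the set of indices containing x is independent
  have hindep : ∀ x : Fin m, ∀ i ∈ {i | x ∈ F i}, ∀ j ∈ {i | x ∈ F i}, ¬ G.Adj i j := by
    intro x i hi j hj hadj'
    rw [hadj] at hadj'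
    rcases hadj'.2 with h | h
    · exact h.ne_of_mem hi hj rfl
    · exact h.ne_of_mem hj hi rfl
  choose M hIM hMmax using fun x => exists_maxIndepSet G {i | x ∈ F i} (hindep x)
  have hMinj : Function.Injective M := by
    intro x y hxy
    by_contra hne
    obtain ⟨i, j, hxi, hyj, hdisj⟩ := hsep x y hne
    have hij : i ≠ j := by
      rintro rfl
      exact hdisj.ne_of_mem hxi hxi rfl
    have hiM : i ∈ M x := hIM x hxi
    have hjM : j ∈ M y := hIM y hyj
    rw [hxy] at hiM
    exact (hMmax y).1 i hiM j hjM ((hadj i j).mpr ⟨hij, Or.inl hdisj⟩)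
  have : Function.Injective (fun x : Fin m => (⟨M x, hMmax x⟩ : {I : Set (Fin n) // IsMaxIndepSet G I})) := by
    intro x y h
    exact hMinj (congrArg Subtype.val h)
  calc m = Nat.card (Fin m) := by simp
    _ ≤ misCount G := Nat.card_le_card_of_injective _ this
end

section
/- For all positive integers m and n: if s(m) ≤ n then g(n) ≥ m, and if g(n) ≥ m then s(m) ≤ n; that is, s(m) ≤ n if and only if m ≤ g(n). -/
/-- `maxMis n` is the maximum number of maximal independent sets among all simple graphs
on `n` vertices. -/
noncomputable def maxMis (n : ℕ) : ℕ := sSup {k | ∃ G : SimpleGraph (Fin n), misCount G = k}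

/-- Every independent set extends to a maximal independent set. -/
lemma exists_maxIndep {V : Type*} (G : SimpleGraph V) {I : Set V}
    (hI : ∀ x ∈ I, ∀ y ∈ I, ¬ G.Adj x y) :
    ∃ M, I ⊆ M ∧ IsMaxIndepSet G M := by
  obtain ⟨M, hIM, hmax⟩ := zorn_subset_nonempty {S | ∀ x ∈ S, ∀ y ∈ S, ¬ G.Adj x y}
    (fun c hc hchain _ => ⟨⋃₀ c, fun a ha b hb hab => by
      obtain ⟨s, hs, has⟩ := ha
      obtain ⟨t, ht, hbt⟩ := hb
      rcases hchain.total hs ht with h | h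
      · exact hc ht a (h has) b hbt hab
      · exact hc hs a has b (h hbt) hab,
      fun s hs => Set.subset_sUnion_of_mem hs⟩) I hI
  exact ⟨M, hIM, hmax.prop, fun J hJ hMJ => (hmax.le_of_ge hJ hMJ).antisymm hMJ⟩

lemma misCount_le (n : ℕ) (G : SimpleGraph (Fin n)) :
    misCount G ≤ Nat.card (Set (Fin n)) :=
  Nat.card_le_card_of_injective Subtype.val Subtype.val_injective

lemma maxMis_bddAbove (n : ℕ) :
    BddAbove {k | ∃ G : SimpleGraph (Fin n), misCount G = k} :=
  ⟨Nat.card (Set (Fin n)), fun _ ⟨G, hG⟩ => hG ▸ misCount_le n G⟩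

/-- For positive integers `m` and `n`: `sepNum m ≤ n` if and only if `m ≤ maxMis n`. -/
theorem sepNum_le_iff_le_maxMis :
    ∀ m n : ℕ, 1 ≤ m → 1 ≤ n → (sepNum m ≤ n ↔ m ≤ maxMis n) := by
  intro m n hm hn
  constructor
  · -- from a separating cover with `n` sets, build a graph with `m` MISes
    intro hsep
    -- the set of achievable sizes of separating covers is nonempty
    have hne : ∃ F : Fin m → Set (Fin m), IsSepCover F := by
      refine ⟨fun i => {i}, fun x => ⟨x, rfl⟩, fun x y hxy => ⟨x, y, rfl, rfl, ?_⟩⟩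
      simpa [Set.disjoint_singleton] using hxy
    have hmemInf : sepNum m ∈ {k | ∃ F : Fin k → Set (Fin m), IsSepCover F} :=
      Nat.sInf_mem ⟨m, hne⟩
    obtain ⟨F, hFcov, hFsep⟩ := hmemInf
    -- pad the cover out to `n` sets
    set F' : Fin n → Set (Fin m) :=
      fun i => if h : (i : ℕ) < sepNum m then F ⟨i, h⟩ else ∅ with hF'
    have hF'cov : ∀ x : Fin m, ∃ i : Fin n, x ∈ F' i := by
      intro x
      obtain ⟨i, hi⟩ := hFcov x
      refine ⟨⟨i, lt_of_lt_of_le i.2 hsep⟩, ?_⟩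
      simpa [hF', i.2] using hi
    have hF'sep : ∀ x y : Fin m, x ≠ y →
        ∃ i j : Fin n, x ∈ F' i ∧ y ∈ F' j ∧ Disjoint (F' i) (F' j) := by
      intro x y hxy
      obtain ⟨i, j, hxi, hyj, hd⟩ := hFsep x y hxy
      refine ⟨⟨i, lt_of_lt_of_le i.2 hsep⟩, ⟨j, lt_of_lt_of_le j.2 hsep⟩, ?_, ?_, ?_⟩ <;>
        simpa [hF', i.2, j.2] using (by first | exact hxi | exact hyj | exact hd)
    -- the graph: two indices are adjacent iff their sets are disjoint
    set G : SimpleGraph (Fin n) :=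
      { Adj := fun i j => i ≠ j ∧ Disjoint (F' i) (F' j)
        symm := ⟨fun i j ⟨h1, h2⟩ => ⟨h1.symm, h2.symm⟩⟩
        loopless := ⟨fun i ⟨h1, _⟩ => h1 rfl⟩ } with hG
    have hSindep : ∀ x : Fin m, ∀ a ∈ {i | x ∈ F' i}, ∀ b ∈ {i | x ∈ F' i}, ¬ G.Adj a b := by
      intro x a ha b hb hab
      exact Set.disjoint_left.mp hab.2 ha hb
    choose M hM hMmax using fun x : Fin m => exists_maxIndep G (hSindep x)
    have hmem : ∀ x : Fin m, ∀ i : Fin n, x ∈ F' i → i ∈ M x := fun x i hi => hM x hi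
    have hinj : Function.Injective (fun x : Fin m => (⟨M x, hMmax x⟩ :
        {I : Set (Fin n) // IsMaxIndepSet G I})) := by
      intro x y hxy
      by_contra hne'
      simp only [Subtype.mk.injEq] at hxy
      obtain ⟨i, j, hxi, hyj, hd⟩ := hF'sep x y hne'
      have hij : i ≠ j := by
        rintro rfl
        exact (Set.disjoint_left.mp hd hxi) hxi
      exact (hMmax x).1 i (hmem x i hxi) j (hxy ▸ hmem y j hyj) ⟨hij, hd⟩
    have h1 : m ≤ misCount G := by
      have := Nat.card_le_card_of_injective _ hinj
      simpa [misCount] using this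
    exact h1.trans (le_csSup (maxMis_bddAbove n) ⟨G, rfl⟩)
  · -- from a graph with `≥ m` MISes, build a separating cover with `n` sets
    intro hmax
    have hSne : Set.Nonempty {k | ∃ G : SimpleGraph (Fin n), misCount G = k} :=
      ⟨misCount (⊥ : SimpleGraph (Fin n)), ⊥, rfl⟩
    obtain ⟨G, hG⟩ : maxMis n ∈ {k | ∃ G : SimpleGraph (Fin n), misCount G = k} :=
      Nat.sSup_mem hSne (maxMis_bddAbove n)
    have hmG : m ≤ misCount G := hG ▸ hmax
    haveI : Fintype {I : Set (Fin n) // IsMaxIndepSet G I} := Fintype.ofFinite _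
    have hcard : m ≤ Fintype.card {I : Set (Fin n) // IsMaxIndepSet G I} := by
      rwa [misCount, Nat.card_eq_fintype_card] at hmG
    obtain ⟨f⟩ : Nonempty (Fin m ↪ {I : Set (Fin n) // IsMaxIndepSet G I}) :=
      Function.Embedding.nonempty_of_card_le (by simpa using hcard)
    set I : Fin m → Set (Fin n) := fun x => (f x).1 with hI
    have hIindep : ∀ x, ∀ a ∈ I x, ∀ b ∈ I x, ¬ G.Adj a b := fun x => (f x).2.1
    have hImax : ∀ x, ∀ J : Set (Fin n), (∀ a ∈ J, ∀ b ∈ J, ¬ G.Adj a b) → I x ⊆ J → J = I x :=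
      fun x => (f x).2.2
    -- each MIS is nonempty
    have hIne : ∀ x, (I x).Nonempty := by
      intro x
      rcases Set.eq_empty_or_nonempty (I x) with h | h
      · exfalso
        set v : Fin n := ⟨0, hn⟩
        have hv : ({v} : Set (Fin n)) = I x :=
          hImax x {v} (by rintro a rfl b rfl; exact G.irrefl) (h ▸ Set.empty_subset _)
        rw [h] at hv
        exact absurd hv (by simp)
      · exact h
    refine Nat.sInf_le ⟨fun i => {x : Fin m | i ∈ I x}, fun x => ?_, fun x y hxy => ?_⟩
    · obtain ⟨i, hi⟩ := hIne x
      exact ⟨i, hi⟩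
    · -- distinct MISes give disjoint separating sets
      have hIneq : I x ≠ I y := fun h => hxy (f.injective (Subtype.ext h))
      have hnsub : ¬ I x ⊆ I y := fun h => hIneq (hImax x (I y) (hIindep y) h).symm
      obtain ⟨i, hix, hiy⟩ := Set.not_subset.mp hnsub
      have hni : ¬ (∀ a ∈ I y ∪ {i}, ∀ b ∈ I y ∪ {i}, ¬ G.Adj a b) := by
        intro h
        have := hImax y (I y ∪ {i}) h Set.subset_union_left
        exact hiy (this ▸ Set.mem_union_right _ rfl)
      push_neg at hni
      obtain ⟨a, ha, b, hb, hab⟩ := hni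
      have key : ∃ j ∈ I y, G.Adj i j := by
        rcases ha with ha | ha <;> rcases hb with hb | hb
        · exact absurd hab (hIindep y a ha b hb)
        · simp only [Set.mem_singleton_iff] at hb
          exact ⟨a, ha, hb ▸ hab.symm⟩
        · simp only [Set.mem_singleton_iff] at ha
          exact ⟨b, hb, ha ▸ hab⟩
        · simp only [Set.mem_singleton_iff] at ha hb
          exact absurd hab (ha ▸ hb ▸ G.irrefl)
      obtain ⟨j, hjy, hadj⟩ := key
      refine ⟨i, j, hix, hjy, Set.disjoint_left.mpr ?_⟩
      intro z hzi hzj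
      exact hIindep z i hzi j hzj hadj
end

section
/- If the positive integer m is expressible by an arithmetic expression using exactly n ones and the operations + and × (i.e. m ∈ E_n), then there exists a finite simple graph on n vertices with exactly m maximal independent sets. -/
/-- `ExprWith n m` means the positive integer `m` can be written as an arithmetic expression
using exactly `n` ones and the operations `+` and `*` (i.e. `m ∈ E_n`). -/
inductive ExprWith : ℕ → ℕ → Prop
  | one : ExprWith 1 1
  | add {i j a b : ℕ} : ExprWith i a → ExprWith j b → ExprWith (i + j) (a + b)
  | mul {i j a b : ℕ} : ExprWith i a → ExprWith j b → ExprWith (i + j) (a * b)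

section Aux

variable {α β : Type*}

/-- Disjoint union of two simple graphs. -/
def sumG (G : SimpleGraph α) (H : SimpleGraph β) : SimpleGraph (α ⊕ β) where
  Adj x y := match x, y with
    | .inl a, .inl b => G.Adj a b
    | .inr a, .inr b => H.Adj a b
    | .inl _, .inr _ => False
    | .inr _, .inl _ => False
  symm := ⟨by rintro (a|a) (b|b) h <;> simp_all <;> exact h.symm⟩
  loopless := ⟨by rintro (a|a) h <;> simp_all⟩

/-- Join of two simple graphs. -/
def joinG (G : SimpleGraph α) (H : SimpleGraph β) : SimpleGraph (α ⊕ β) where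
  Adj x y := match x, y with
    | .inl a, .inl b => G.Adj a b
    | .inr a, .inr b => H.Adj a b
    | .inl _, .inr _ => True
    | .inr _, .inl _ => True
  symm := ⟨by rintro (a|a) (b|b) h <;> simp_all <;> exact h.symm⟩
  loopless := ⟨by rintro (a|a) h <;> simp_all⟩

@[simp] lemma sumG_adj_ll {G : SimpleGraph α} {H : SimpleGraph β} {a b : α} :
    (sumG G H).Adj (Sum.inl a) (Sum.inl b) ↔ G.Adj a b := Iff.rfl
@[simp] lemma sumG_adj_rr {G : SimpleGraph α} {H : SimpleGraph β} {a b : β} :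
    (sumG G H).Adj (Sum.inr a) (Sum.inr b) ↔ H.Adj a b := Iff.rfl
@[simp] lemma sumG_adj_lr {G : SimpleGraph α} {H : SimpleGraph β} {a : α} {b : β} :
    ¬ (sumG G H).Adj (Sum.inl a) (Sum.inr b) := fun h => h
@[simp] lemma sumG_adj_rl {G : SimpleGraph α} {H : SimpleGraph β} {a : β} {b : α} :
    ¬ (sumG G H).Adj (Sum.inr a) (Sum.inl b) := fun h => h

@[simp] lemma joinG_adj_ll {G : SimpleGraph α} {H : SimpleGraph β} {a b : α} :
    (joinG G H).Adj (Sum.inl a) (Sum.inl b) ↔ G.Adj a b := Iff.rfl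
@[simp] lemma joinG_adj_rr {G : SimpleGraph α} {H : SimpleGraph β} {a b : β} :
    (joinG G H).Adj (Sum.inr a) (Sum.inr b) ↔ H.Adj a b := Iff.rfl
@[simp] lemma joinG_adj_lr {G : SimpleGraph α} {H : SimpleGraph β} {a : α} {b : β} :
    (joinG G H).Adj (Sum.inl a) (Sum.inr b) := trivial
@[simp] lemma joinG_adj_rl {G : SimpleGraph α} {H : SimpleGraph β} {a : β} {b : α} :
    (joinG G H).Adj (Sum.inr a) (Sum.inl b) := trivial

lemma mis_nonempty [Nonempty α] {G : SimpleGraph α} {I : Set α}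
    (h : IsMaxIndepSet G I) : I.Nonempty := by
  rcases Set.eq_empty_or_nonempty I with rfl | h'
  · obtain ⟨a⟩ := ‹Nonempty α›
    have := h.2 {a} (by
      intro x hx y hy
      simp only [Set.mem_singleton_iff] at hx hy
      subst hx; subst hy; exact G.loopless.irrefl _) (Set.empty_subset _)
    simp at this
  · exact h'

lemma decomp (I : Set (α ⊕ β)) :
    I = Sum.inl '' (Sum.inl ⁻¹' I) ∪ Sum.inr '' (Sum.inr ⁻¹' I) := by
  ext (x|x) <;> simp

/-- transfer of MIS along an adjacency-preserving equivalence -/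
lemma mis_map {G : SimpleGraph α} {H : SimpleGraph β} (e : α ≃ β)
    (he : ∀ x y, G.Adj x y ↔ H.Adj (e x) (e y)) {I : Set α}
    (h : IsMaxIndepSet G I) : IsMaxIndepSet H (e '' I) := by
  constructor
  · rintro x ⟨u, hu, rfl⟩ y ⟨v, hv, rfl⟩ hadj
    exact h.1 u hu v hv ((he u v).2 hadj)
  · intro J hJ hIJ
    have h1 : e ⁻¹' J = I := by
      apply h.2
      · intro x hx y hy hadj
        exact hJ _ hx _ hy ((he x y).1 hadj)
      · intro x hx
        exact hIJ ⟨x, hx, rfl⟩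
    calc J = e '' (e ⁻¹' J) := (Set.image_preimage_eq J e.surjective).symm
    _ = e '' I := by rw [h1]

lemma misCount_congr {G : SimpleGraph α} {H : SimpleGraph β} (e : α ≃ β)
    (he : ∀ x y, G.Adj x y ↔ H.Adj (e x) (e y)) : misCount G = misCount H := by
  apply Nat.card_congr
  refine Equiv.subtypeEquiv (Equiv.Set.congr e) (fun I => ⟨fun h => mis_map e he h, fun h => ?_⟩)
  have := mis_map e.symm (fun x y => by simpa using (he (e.symm x) (e.symm y)).symm) h
  simpa [Set.image_image] using this

lemma misCount_bot : misCount (⊥ : SimpleGraph (Fin 1)) = 1 := by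
  have key : ∀ I : Set (Fin 1), IsMaxIndepSet (⊥ : SimpleGraph (Fin 1)) I ↔ I = Set.univ := by
    intro I
    constructor
    · intro h
      exact (h.2 Set.univ (by simp) (Set.subset_univ _)).symm
    · rintro rfl
      exact ⟨by simp, fun J _ hJ => Set.eq_univ_of_univ_subset hJ⟩
  have : Unique {I : Set (Fin 1) // IsMaxIndepSet (⊥ : SimpleGraph (Fin 1)) I} := by
    refine ⟨⟨⟨Set.univ, (key _).2 rfl⟩⟩, fun I => Subtype.ext ?_⟩
    exact (key _).1 I.2
  exact Nat.card_unique

section Join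

variable [Nonempty α] [Nonempty β] {G : SimpleGraph α} {H : SimpleGraph β}

set_option linter.unusedSectionVars false in
lemma join_mis_inl {A : Set α} (hA : IsMaxIndepSet G A) :
    IsMaxIndepSet (joinG G H) (Sum.inl '' A) := by
  obtain ⟨a0, ha0⟩ := mis_nonempty hA
  constructor
  · rintro x ⟨u, hu, rfl⟩ y ⟨v, hv, rfl⟩ hadj
    exact hA.1 u hu v hv hadj
  · intro J hJ hIJ
    have hJl : ∀ x ∈ J, ∃ u, Sum.inl u = x := by
      rintro (x|x) hx
      · exact ⟨x, rfl⟩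
      · exact absurd (hJ _ (hIJ ⟨a0, ha0, rfl⟩) _ hx) (by simp)
    have h1 : Sum.inl ⁻¹' J = A := by
      apply hA.2
      · intro x hx y hy hadj
        exact hJ _ hx _ hy (by simpa using hadj)
      · intro x hx; exact hIJ ⟨x, hx, rfl⟩
    ext x
    constructor
    · intro hx
      obtain ⟨u, rfl⟩ := hJl x hx
      exact ⟨u, h1 ▸ hx, rfl⟩
    · rintro ⟨u, hu, rfl⟩
      exact hIJ ⟨u, hu, rfl⟩

set_option linter.unusedSectionVars false in
lemma join_mis_inr {B : Set β} (hB : IsMaxIndepSet H B) :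
    IsMaxIndepSet (joinG G H) (Sum.inr '' B) := by
  obtain ⟨b0, hb0⟩ := mis_nonempty hB
  constructor
  · rintro x ⟨u, hu, rfl⟩ y ⟨v, hv, rfl⟩ hadj
    exact hB.1 u hu v hv hadj
  · intro J hJ hIJ
    have hJr : ∀ x ∈ J, ∃ u, Sum.inr u = x := by
      rintro (x|x) hx
      · exact absurd (hJ _ (hIJ ⟨b0, hb0, rfl⟩) _ hx) (by simp)
      · exact ⟨x, rfl⟩
    have h1 : Sum.inr ⁻¹' J = B := by
      apply hB.2
      · intro x hx y hy hadj
        exact hJ _ hx _ hy (by simpa using hadj)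
      · intro x hx; exact hIJ ⟨x, hx, rfl⟩
    ext x
    constructor
    · intro hx
      obtain ⟨u, rfl⟩ := hJr x hx
      exact ⟨u, h1 ▸ hx, rfl⟩
    · rintro ⟨u, hu, rfl⟩
      exact hIJ ⟨u, hu, rfl⟩

def joinFun (G : SimpleGraph α) (H : SimpleGraph β) :
    {A : Set α // IsMaxIndepSet G A} ⊕ {B : Set β // IsMaxIndepSet H B} →
      {I : Set (α ⊕ β) // IsMaxIndepSet (joinG G H) I} := fun x =>
  match x with
  | .inl A => ⟨Sum.inl '' A.1, join_mis_inl A.2⟩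
  | .inr B => ⟨Sum.inr '' B.1, join_mis_inr B.2⟩

lemma misCount_join [Finite α] [Finite β] :
    misCount (joinG G H) = misCount G + misCount H := by
  classical
  set f := joinFun G H with hfdef
  have hf : Function.Bijective f := by
    constructor
    · rintro (A|A) (B|B) hAB
      · have hAB' : Sum.inl '' A.1 = Sum.inl '' B.1 := congrArg Subtype.val hAB
        congr 1
        exact Subtype.ext (Set.image_injective.2 Sum.inl_injective hAB')
      · exfalso
        have hAB' : Sum.inl '' A.1 = Sum.inr '' B.1 := congrArg Subtype.val hAB
        obtain ⟨a0, ha0⟩ := mis_nonempty A.2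
        have : (Sum.inl a0 : α ⊕ β) ∈ Sum.inr '' B.1 := hAB' ▸ ⟨a0, ha0, rfl⟩
        simp at this
      · exfalso
        have hAB' : Sum.inr '' A.1 = Sum.inl '' B.1 := congrArg Subtype.val hAB
        obtain ⟨a0, ha0⟩ := mis_nonempty A.2
        have : (Sum.inr a0 : α ⊕ β) ∈ Sum.inl '' B.1 := hAB' ▸ ⟨a0, ha0, rfl⟩
        simp at this
      · have hAB' : Sum.inr '' A.1 = Sum.inr '' B.1 := congrArg Subtype.val hAB
        congr 1
        exact Subtype.ext (Set.image_injective.2 Sum.inr_injective hAB')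
    · rintro ⟨I, hI⟩
      obtain ⟨x0, hx0⟩ := mis_nonempty hI
      rcases x0 with a0 | b0
      · -- I is contained in the left side
        have hIl : ∀ x ∈ I, ∃ u, Sum.inl u = x := by
          rintro (x|x) hx
          · exact ⟨x, rfl⟩
          · exact absurd (hI.1 _ hx0 _ hx) (by simp)
        have hImg : I = Sum.inl '' (Sum.inl ⁻¹' I) := by
          ext x
          constructor
          · intro hx; obtain ⟨u, rfl⟩ := hIl x hx; exact ⟨u, hx, rfl⟩
          · rintro ⟨u, hu, rfl⟩; exact hu
        have hA : IsMaxIndepSet G (Sum.inl ⁻¹' I) := by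
          constructor
          · intro x hx y hy hadj
            exact hI.1 _ hx _ hy (by simpa using hadj)
          · intro J hJ hAJ
            have := hI.2 (Sum.inl '' J) ?_ ?_
            · have := congrArg (Sum.inl ⁻¹' ·) this
              simpa [Set.preimage_image_eq _ Sum.inl_injective] using this
            · rintro x ⟨u, hu, rfl⟩ y ⟨v, hv, rfl⟩ hadj
              exact hJ u hu v hv hadj
            · intro x hx
              obtain ⟨u, rfl⟩ := hIl x hx
              exact ⟨u, hAJ hx, rfl⟩
        exact ⟨.inl ⟨_, hA⟩, Subtype.ext hImg.symm⟩
      · -- I is contained in the right side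
        have hIr : ∀ x ∈ I, ∃ u, Sum.inr u = x := by
          rintro (x|x) hx
          · exact absurd (hI.1 _ hx0 _ hx) (by simp)
          · exact ⟨x, rfl⟩
        have hImg : I = Sum.inr '' (Sum.inr ⁻¹' I) := by
          ext x
          constructor
          · intro hx; obtain ⟨u, rfl⟩ := hIr x hx; exact ⟨u, hx, rfl⟩
          · rintro ⟨u, hu, rfl⟩; exact hu
        have hB : IsMaxIndepSet H (Sum.inr ⁻¹' I) := by
          constructor
          · intro x hx y hy hadj
            exact hI.1 _ hx _ hy (by simpa using hadj)
          · intro J hJ hBJ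
            have := hI.2 (Sum.inr '' J) ?_ ?_
            · have := congrArg (Sum.inr ⁻¹' ·) this
              simpa [Set.preimage_image_eq _ Sum.inr_injective] using this
            · rintro x ⟨u, hu, rfl⟩ y ⟨v, hv, rfl⟩ hadj
              exact hJ u hu v hv hadj
            · intro x hx
              obtain ⟨u, rfl⟩ := hIr x hx
              exact ⟨u, hBJ hx, rfl⟩
        exact ⟨.inr ⟨_, hB⟩, Subtype.ext hImg.symm⟩
  calc misCount (joinG G H)
      = Nat.card ({A : Set α // IsMaxIndepSet G A} ⊕ {B : Set β // IsMaxIndepSet H B}) :=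
        (Nat.card_congr (Equiv.ofBijective f hf)).symm
    _ = misCount G + misCount H := Nat.card_sum

end Join

section SumSec

variable {G : SimpleGraph α} {H : SimpleGraph β}

lemma sum_indep {A : Set α} {B : Set β}
    (hA : ∀ x ∈ A, ∀ y ∈ A, ¬ G.Adj x y) (hB : ∀ x ∈ B, ∀ y ∈ B, ¬ H.Adj x y) :
    ∀ x ∈ Sum.inl '' A ∪ Sum.inr '' B, ∀ y ∈ Sum.inl '' A ∪ Sum.inr '' B,
      ¬ (sumG G H).Adj x y := by
  rintro x (⟨u, hu, rfl⟩ | ⟨u, hu, rfl⟩) y (⟨v, hv, rfl⟩ | ⟨v, hv, rfl⟩) hadj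
  · exact hA u hu v hv hadj
  · exact hadj
  · exact hadj
  · exact hB u hu v hv hadj

lemma sum_mis {A : Set α} {B : Set β}
    (hA : IsMaxIndepSet G A) (hB : IsMaxIndepSet H B) :
    IsMaxIndepSet (sumG G H) (Sum.inl '' A ∪ Sum.inr '' B) := by
  constructor
  · exact sum_indep hA.1 hB.1
  · intro J hJ hIJ
    have hJA : Sum.inl ⁻¹' J = A := by
      apply hA.2
      · intro x hx y hy hadj
        exact hJ _ hx _ hy (by simpa using hadj)
      · intro x hx; exact hIJ (Or.inl ⟨x, hx, rfl⟩)
    have hJB : Sum.inr ⁻¹' J = B := by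
      apply hB.2
      · intro x hx y hy hadj
        exact hJ _ hx _ hy (by simpa using hadj)
      · intro x hx; exact hIJ (Or.inr ⟨x, hx, rfl⟩)
    rw [decomp J, hJA, hJB]

def sumFun (G : SimpleGraph α) (H : SimpleGraph β) :
    {A : Set α // IsMaxIndepSet G A} × {B : Set β // IsMaxIndepSet H B} →
      {I : Set (α ⊕ β) // IsMaxIndepSet (sumG G H) I} := fun p =>
  ⟨Sum.inl '' p.1.1 ∪ Sum.inr '' p.2.1, sum_mis p.1.2 p.2.2⟩

lemma misCount_sum [Finite α] [Finite β] :
    misCount (sumG G H) = misCount G * misCount H := by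
  classical
  set f := sumFun G H with hfdef
  have hf : Function.Bijective f := by
    constructor
    · rintro ⟨A, B⟩ ⟨A', B'⟩ hEq0
      have hEq : Sum.inl '' A.1 ∪ Sum.inr '' B.1 = Sum.inl '' A'.1 ∪ Sum.inr '' B'.1 :=
        congrArg Subtype.val hEq0
      have hA : A.1 = A'.1 := by
        have := congrArg (Sum.inl ⁻¹' ·) hEq
        simpa [Set.preimage_union, Set.preimage_image_eq _ Sum.inl_injective,
          Set.eq_empty_iff_forall_notMem] using this
      have hB : B.1 = B'.1 := by
        have := congrArg (Sum.inr ⁻¹' ·) hEq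
        simpa [Set.preimage_union, Set.preimage_image_eq _ Sum.inr_injective,
          Set.eq_empty_iff_forall_notMem] using this
      exact Prod.ext (Subtype.ext hA) (Subtype.ext hB)
    · rintro ⟨I, hI⟩
      have hA : IsMaxIndepSet G (Sum.inl ⁻¹' I) := by
        constructor
        · intro x hx y hy hadj
          exact hI.1 _ hx _ hy (by simpa using hadj)
        · intro J hJ hAJ
          have hK := hI.2 (Sum.inl '' J ∪ Sum.inr '' (Sum.inr ⁻¹' I))
            (sum_indep hJ (fun x hx y hy hadj => hI.1 _ hx _ hy (by simpa using hadj))) ?_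
          · have := congrArg (Sum.inl ⁻¹' ·) hK
            simpa [Set.preimage_union, Set.preimage_image_eq _ Sum.inl_injective,
              Set.eq_empty_iff_forall_notMem] using this
          · intro x hx
            rcases (decomp I ▸ hx : x ∈ _ ∪ _) with ⟨u, hu, rfl⟩ | hr
            · exact Or.inl ⟨u, hAJ hu, rfl⟩
            · exact Or.inr hr
      have hB : IsMaxIndepSet H (Sum.inr ⁻¹' I) := by
        constructor
        · intro x hx y hy hadj
          exact hI.1 _ hx _ hy (by simpa using hadj)
        · intro J hJ hBJ
          have hK := hI.2 (Sum.inl '' (Sum.inl ⁻¹' I) ∪ Sum.inr '' J)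
            (sum_indep (fun x hx y hy hadj => hI.1 _ hx _ hy (by simpa using hadj)) hJ) ?_
          · have := congrArg (Sum.inr ⁻¹' ·) hK
            simpa [Set.preimage_union, Set.preimage_image_eq _ Sum.inr_injective,
              Set.eq_empty_iff_forall_notMem] using this
          · intro x hx
            rcases (decomp I ▸ hx : x ∈ _ ∪ _) with hl | ⟨u, hu, rfl⟩
            · exact Or.inl hl
            · exact Or.inr ⟨u, hBJ hu, rfl⟩
      exact ⟨⟨⟨_, hA⟩, ⟨_, hB⟩⟩, Subtype.ext (decomp I).symm⟩
  calc misCount (sumG G H)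
      = Nat.card ({A : Set α // IsMaxIndepSet G A} × {B : Set β // IsMaxIndepSet H B}) :=
        (Nat.card_congr (Equiv.ofBijective f hf)).symm
    _ = misCount G * misCount H := Nat.card_prod _ _

end SumSec

end Aux

lemma ExprWith.pos {n m : ℕ} (h : ExprWith n m) : 0 < n := by
  induction h with
  | one => exact Nat.one_pos
  | add h1 h2 ih1 ih2 => omega
  | mul h1 h2 ih1 ih2 => omega

/-- From an expression of `m` with `n` ones one can construct a graph on `n` vertices with
exactly `m` maximal independent sets. -/
theorem graph_of_expression (n m : ℕ) (h : ExprWith n m) :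
    ∃ G : SimpleGraph (Fin n), misCount G = m := by
  induction h with
  | one => exact ⟨⊥, misCount_bot⟩
  | @add i j a b h1 h2 ih1 ih2 =>
    obtain ⟨G, hG⟩ := ih1
    obtain ⟨H, hH⟩ := ih2
    haveI : Nonempty (Fin i) := Fin.pos_iff_nonempty.1 h1.pos
    haveI : Nonempty (Fin j) := Fin.pos_iff_nonempty.1 h2.pos
    refine ⟨(joinG G H).map finSumFinEquiv.toEmbedding, ?_⟩
    rw [← misCount_congr finSumFinEquiv
      (fun x y => (SimpleGraph.map_adj_apply).symm)]
    rw [misCount_join, hG, hH]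
  | @mul i j a b h1 h2 ih1 ih2 =>
    obtain ⟨G, hG⟩ := ih1
    obtain ⟨H, hH⟩ := ih2
    refine ⟨(sumG G H).map finSumFinEquiv.toEmbedding, ?_⟩
    rw [← misCount_congr finSumFinEquiv
      (fun x y => (SimpleGraph.map_adj_apply).symm)]
    rw [misCount_sum, hG, hH]
end

section
/- (Selfridge) The greatest integer of complexity n is ℓ(n): for every positive integer n, the complexity of ℓ(n) equals n, and every positive integer m whose complexity is at most n satisfies m ≤ ℓ(n). -/
/-- `ProdOfSum n m` holds if `m` can be written as the product of a nonempty list of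
positive integers whose sum is `n`. -/
def ProdOfSum (n m : ℕ) : Prop :=
  ∃ l : List ℕ, l ≠ [] ∧ (∀ a ∈ l, 0 < a) ∧ l.sum = n ∧ l.prod = m

/-- `ell n` is the largest integer expressible as a product of positive integers summing to `n`. -/
noncomputable def ell (n : ℕ) : ℕ := sSup {m | ProdOfSum n m}

/-- The complexity of `m`: the least number of ones needed to express `m` using `+` and `*`. -/
noncomputable def complexity (m : ℕ) : ℕ := sInf {n | ExprWith n m}

lemma prod_le_sum_pow : ∀ l : List ℕ, (∀ a ∈ l, 0 < a) → l.prod ≤ l.sum ^ l.sum := by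
  intro l
  induction l with
  | nil => simp
  | cons a t ih =>
    intro h
    have ha : 0 < a := h a List.mem_cons_self
    have ht := ih (fun x hx => h x (List.mem_cons_of_mem a hx))
    simp only [List.prod_cons, List.sum_cons]
    calc a * t.prod ≤ a * t.sum ^ t.sum := Nat.mul_le_mul_left a ht
      _ ≤ a * (a + t.sum) ^ t.sum :=
          Nat.mul_le_mul_left a (Nat.pow_le_pow_left (Nat.le_add_left _ _) _)
      _ ≤ (a + t.sum) * (a + t.sum) ^ t.sum :=
          Nat.mul_le_mul_right _ (Nat.le_add_right _ _)
      _ = (a + t.sum) ^ (t.sum + 1) := by ring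
      _ ≤ (a + t.sum) ^ (a + t.sum) := by
          apply Nat.pow_le_pow_right (by omega) (by omega)

lemma bddAbove_pos (n : ℕ) : BddAbove {m | ProdOfSum n m} := by
  refine ⟨n ^ n, fun m hm => ?_⟩
  obtain ⟨l, _, hpos, hs, hp⟩ := hm
  subst hs; subst hp
  exact prod_le_sum_pow l hpos

lemma prodOfSum_self {n : ℕ} (hn : 1 ≤ n) : ProdOfSum n n :=
  ⟨[n], by simp, by simpa using (show 0 < n by omega), by simp, by simp⟩

lemma le_ell {n m : ℕ} (h : ProdOfSum n m) : m ≤ ell n :=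
  le_csSup (bddAbove_pos n) h

lemma ell_mem {n : ℕ} (hn : 1 ≤ n) : ProdOfSum n (ell n) :=
  Nat.sSup_mem (s := {m | ProdOfSum n m}) ⟨n, prodOfSum_self hn⟩ (bddAbove_pos n)

lemma self_le_ell {n : ℕ} (hn : 1 ≤ n) : n ≤ ell n := le_ell (prodOfSum_self hn)

lemma ell_one : ell 1 = 1 := by
  have h := ell_mem (le_refl 1)
  obtain ⟨l, _, hpos, hs, hp⟩ := h
  have := prod_le_sum_pow l hpos
  rw [hs, hp] at this
  simp at this
  have h1 : (1:ℕ) ≤ ell 1 := self_le_ell (le_refl 1)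
  omega

lemma exprWith_self : ∀ a : ℕ, 1 ≤ a → ExprWith a a := by
  intro a
  induction a with
  | zero => omega
  | succ k ih =>
    intro _
    rcases Nat.eq_zero_or_pos k with hk | hk
    · subst hk; exact ExprWith.one
    · exact ExprWith.add (ih hk) ExprWith.one

lemma exprWith_pos {k m : ℕ} (h : ExprWith k m) : 1 ≤ k ∧ 1 ≤ m := by
  induction h with
  | one => omega
  | add _ _ ih1 ih2 => omega
  | mul _ _ ih1 ih2 => exact ⟨by omega, Nat.mul_pos (by omega) (by omega)⟩

lemma prodOfSum_expr : ∀ l : List ℕ, l ≠ [] → (∀ a ∈ l, 0 < a) → ExprWith l.sum l.prod := by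
  intro l
  induction l with
  | nil => intro h; exact absurd rfl h
  | cons a t ih =>
    intro _ hpos
    have ha : 0 < a := hpos a List.mem_cons_self
    rcases t with _ | ⟨b, t'⟩
    · simpa using exprWith_self a ha
    · have ht := ih (by simp) (fun x hx => hpos x (List.mem_cons_of_mem a hx))
      simpa using ExprWith.mul (exprWith_self a ha) ht

lemma ell_mul {i j : ℕ} (hi : 1 ≤ i) (hj : 1 ≤ j) : ell i * ell j ≤ ell (i + j) := by
  obtain ⟨l1, hne1, hpos1, hs1, hp1⟩ := ell_mem hi
  obtain ⟨l2, hne2, hpos2, hs2, hp2⟩ := ell_mem hj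
  apply le_ell
  refine ⟨l1 ++ l2, by simp [hne1], ?_, by simp [hs1, hs2], by simp [hp1, hp2]⟩
  intro x hx
  rcases List.mem_append.mp hx with h | h
  · exact hpos1 x h
  · exact hpos2 x h

lemma ell_succ {n : ℕ} (hn : 1 ≤ n) : ell n + 1 ≤ ell (n + 1) := by
  obtain ⟨l, hne, hpos, hs, hp⟩ := ell_mem hn
  rcases l with _ | ⟨a, t⟩
  · exact absurd rfl hne
  · have htprod : 1 ≤ t.prod := by
      apply List.one_le_prod
      intro x hx; exact hpos x (List.mem_cons_of_mem a hx)
    have h2 : ProdOfSum (n + 1) ((a + 1) * t.prod) := by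
      refine ⟨(a + 1) :: t, by simp, ?_, ?_, by simp⟩
      · intro x hx
        rcases List.mem_cons.mp hx with h | h
        · omega
        · exact hpos x (List.mem_cons_of_mem a h)
      · simp at hs ⊢; omega
    have h3 := le_ell h2
    have : a * t.prod = ell n := by simpa using hp
    nlinarith [this, htprod]

lemma ell_mono {i j : ℕ} (hi : 1 ≤ i) (hij : i ≤ j) : ell i ≤ ell j := by
  induction j with
  | zero => omega
  | succ k ih =>
    rcases Nat.lt_or_ge i (k + 1) with h | h
    · have hk : 1 ≤ k := by omega
      have := ell_succ hk
      have := ih (by omega)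
      omega
    · have : i = k + 1 := by omega
      subst this; rfl

lemma ell_add {i j : ℕ} (hi : 1 ≤ i) (hj : 1 ≤ j) : ell i + ell j ≤ ell (i + j) := by
  rcases Nat.lt_or_ge i 2 with hi2 | hi2
  · have : i = 1 := by omega
    subst this
    rw [ell_one]
    have := ell_succ hj
    rw [Nat.add_comm 1 j]
    omega
  rcases Nat.lt_or_ge j 2 with hj2 | hj2
  · have : j = 1 := by omega
    subst this
    rw [ell_one]
    have := ell_succ hi
    omega
  · have h1 : 2 ≤ ell i := le_trans hi2 (self_le_ell hi)
    have h2 : 2 ≤ ell j := le_trans hj2 (self_le_ell hj)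
    calc ell i + ell j ≤ ell i * ell j := Nat.add_le_mul h1 h2
      _ ≤ ell (i + j) := ell_mul hi hj

lemma expr_le_ell {k m : ℕ} (h : ExprWith k m) : m ≤ ell k := by
  induction h with
  | one => rw [ell_one]
  | @add i j a b h1 h2 ih1 ih2 =>
    calc a + b ≤ ell i + ell j := Nat.add_le_add ih1 ih2
      _ ≤ ell (i + j) := ell_add (exprWith_pos h1).1 (exprWith_pos h2).1
  | @mul i j a b h1 h2 ih1 ih2 =>
    calc a * b ≤ ell i * ell j := Nat.mul_le_mul ih1 ih2
      _ ≤ ell (i + j) := ell_mul (exprWith_pos h1).1 (exprWith_pos h2).1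

lemma ell_strict_mono {i j : ℕ} (hi : 1 ≤ i) (hij : i < j) : ell i < ell j := by
  have h1 := ell_succ hi
  have h2 := ell_mono (show 1 ≤ i + 1 by omega) (show i + 1 ≤ j by omega)
  omega

/-- Selfridge: the greatest integer of complexity `n` is `ell n`. -/
theorem selfridge :
    ∀ n : ℕ, 1 ≤ n →
      complexity (ell n) = n ∧ ∀ m : ℕ, 1 ≤ m → complexity m ≤ n → m ≤ ell n := by
  intro n hn
  obtain ⟨l, hne, hpos, hs, hp⟩ := ell_mem hn
  have h1 : ExprWith n (ell n) := by
    have := prodOfSum_expr l hne hpos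
    rwa [hs, hp] at this
  have hne' : {k | ExprWith k (ell n)}.Nonempty := ⟨n, h1⟩
  have hmem : ExprWith (complexity (ell n)) (ell n) := Nat.sInf_mem (s := {k | ExprWith k (ell n)}) hne'
  have hle : complexity (ell n) ≤ n := by exact Nat.sInf_le h1
  have hc1 : 1 ≤ complexity (ell n) := (exprWith_pos hmem).1
  have hge : n ≤ complexity (ell n) := by
    by_contra hcon
    push_neg at hcon
    have := ell_strict_mono hc1 hcon
    have := expr_le_ell hmem
    omega
  refine ⟨by omega, ?_⟩
  intro m hm hcm
  have hmexpr : ExprWith m m := exprWith_self m hm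
  have hmem2 : ExprWith (complexity m) m := Nat.sInf_mem (s := {k | ExprWith k m}) ⟨m, hmexpr⟩
  have hc2 : 1 ≤ complexity m := (exprWith_pos hmem2).1
  have := expr_le_ell hmem2
  have := ell_mono hc2 hcm
  omega
end
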